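/- arXiv:2006.02257 — 2 statements merged into one kernel-verified Lean document; each statement's English description precedes it below -/
import Mathlib

section
/- Let n ≥ 1, let α be a set, and let φ : ℝ → α → α satisfy φ(0)(x) = x and φ(t+s)(x) = φ(t)(φ(s)(x)) for all t, s ∈ ℝ and x ∈ α (a flow). Let A : α → ℂ^{n×n} be such that for every x ∈ α the map t ↦ A(φ(t)(x)) is continuous, and let C : α × ℝ → ℂ^{n×n} satisfy C(x,0) = Id, invertibility of every C(x,t), and, for every x ∈ α and t ∈ ℝ, the map s ↦ C(x,s) has derivative −A(φ(t)(x))·C(x,t) at s = t. Let τ : α → ℝ satisfy τ(φ(t)(x)) = τ(x) − t for all x ∈ α, t ∈ ℝ. Define R : α → ℂ^{n×n} by R(x) := C(x, τ(x))^{-1}. Then R(φ(t)(x)) = C(x,t)·R(x) for all x ∈ α and t ∈ ℝ, and consequently for every x the map t ↦ R(φ(t)(x)) is differentiable with derivative −A(φ(t)(x))·R(φ(t)(x)) at every t ∈ ℝ, i.e. R is an integrating factor solving XR + AR = 0 along the flow. -/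
open Matrix

attribute [local instance] Matrix.normedAddCommGroup Matrix.normedSpace

open scoped Topology

/-!
Both `s ↦ C (φ t x, s)` and `s ↦ C (x, t + s)` solve the linear equation
`M' = -A (φ (t + s) x) M`, so `C (φ t x, s)⁻¹ * C (x, t + s)` has zero derivative; this gives
the cocycle identity `C (x, t + s) = C (φ t x, s) * C (x, t)`. Taking `s = τ x - t = τ (φ t x)`
yields `R (φ t x) = C (x, t) * R x`, whose right-hand side is differentiated through `C`.
-/

section

variable {𝕜 R : Type*} [NontriviallyNormedField 𝕜] [NormedField R] [NormedAlgebra 𝕜 R]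
  {l m n : Type*} [Fintype m] [Fintype n]

theorem HasDerivAt.matrix_mul {f : 𝕜 → Matrix l m R} {g : 𝕜 → Matrix m n R}
    {f' : Matrix l m R} {g' : Matrix m n R} {t : 𝕜}
    (hf : HasDerivAt f f' t) (hg : HasDerivAt g g' t) :
    HasDerivAt (fun s => f s * g s) (f' * g t + f t * g') t := by
  refine hasDerivAt_pi.2 fun i => hasDerivAt_pi.2 fun j => ?_
  simp only [Matrix.mul_apply, Matrix.add_apply, ← Finset.sum_add_distrib]
  exact HasDerivAt.fun_sum fun k _ =>
    ((hasDerivAt_pi.1 (hasDerivAt_pi.1 hf i) k).mul (hasDerivAt_pi.1 (hasDerivAt_pi.1 hg k) j))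

variable [DecidableEq n]

theorem HasDerivAt.matrix_inv {M : 𝕜 → Matrix n n R} {M' : Matrix n n R} {t : 𝕜}
    (hM : HasDerivAt M M' t) (ht : IsUnit (M t).det) :
    HasDerivAt (fun s => (M s)⁻¹) (-((M t)⁻¹ * M' * (M t)⁻¹)) t := by
  have hinv : ContinuousAt (fun s => (M s)⁻¹) t :=
    (continuousAt_matrix_inv _ (NormedRing.inverse_continuousAt ht.unit)).comp hM.continuousAt
  have hdet : ∀ᶠ u in 𝓝[≠] t, (M u).det ≠ 0 := nhdsWithin_le_nhds <|
    (continuous_id.matrix_det.continuousAt.comp hM.continuousAt).eventually_ne ht.ne_zero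
  have hslope : ∀ᶠ u in 𝓝[≠] t,
      -((M u)⁻¹ * slope M t u * (M t)⁻¹) = slope (fun s => (M s)⁻¹) t u := by
    filter_upwards [hdet] with u hu
    have hu' : IsUnit (M u).det := hu.isUnit
    simp only [slope_def_module, Matrix.mul_smul, Matrix.smul_mul, Matrix.mul_sub, Matrix.sub_mul,
      nonsing_inv_mul _ hu', Matrix.mul_assoc, mul_nonsing_inv _ ht, Matrix.one_mul,
      Matrix.mul_one, smul_sub, neg_sub]
  exact hasDerivAt_iff_tendsto_slope.2 <|
    (((hinv.tendsto.mono_left nhdsWithin_le_nhds).mul (hasDerivAt_iff_tendsto_slope.1 hM)).mul_const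
      _).neg.congr' hslope

theorem eq_mul_of_hasDerivAt_neg_mul [NormedAlgebra ℝ R] {B Y Z : ℝ → Matrix n n R}
    (hY : ∀ s, HasDerivAt Y (-(B s * Y s)) s) (hZ : ∀ s, HasDerivAt Z (-(B s * Z s)) s)
    (hY_unit : ∀ s, IsUnit (Y s).det) (hY_zero : Y 0 = 1) (s : ℝ) :
    Z s = Y s * Z 0 := by
  have hconst : ∀ u, HasDerivAt (fun u => (Y u)⁻¹ * Z u) 0 u := by
    intro u
    convert ((hY u).matrix_inv (hY_unit u)).matrix_mul (hZ u) using 1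
    simp only [Matrix.mul_neg, Matrix.neg_mul, Matrix.mul_assoc,
      mul_nonsing_inv_cancel_left _ _ (hY_unit u), neg_neg, add_neg_cancel]
  have h := is_const_of_deriv_eq_zero (fun u => (hconst u).differentiableAt)
    (fun u => (hconst u).deriv) s 0
  simp only [hY_zero, inv_one, Matrix.one_mul] at h
  rw [← h, mul_nonsing_inv_cancel_left _ _ (hY_unit s)]

end

theorem cocycle_of_hasDerivAt_neg_mul {α n R : Type*} [Fintype n] [DecidableEq n]
    [NormedField R] [NormedAlgebra ℝ R] (φ : ℝ → α → α)
    (hφ_add : ∀ (t s : ℝ) (x : α), φ (t + s) x = φ t (φ s x))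
    (A : α → Matrix n n R) (C : α × ℝ → Matrix n n R) (hC_zero : ∀ x, C (x, 0) = 1)
    (hC_inv : ∀ x t, IsUnit (C (x, t)))
    (hC_ode : ∀ x t, HasDerivAt (fun s => C (x, s)) (-(A (φ t x) * C (x, t))) t)
    (x : α) (t s : ℝ) :
    C (x, t + s) = C (φ t x, s) * C (x, t) := by
  have hY : ∀ s, HasDerivAt (fun s => C (φ t x, s)) (-(A (φ (t + s) x) * C (φ t x, s))) s :=
    fun s => by simpa only [← hφ_add, add_comm s t] using hC_ode (φ t x) s
  have hZ : ∀ s, HasDerivAt (fun s => C (x, t + s)) (-(A (φ (t + s) x) * C (x, t + s))) s :=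
    fun s => (hC_ode x (t + s)).comp_const_add t s
  simpa only [add_zero] using eq_mul_of_hasDerivAt_neg_mul hY hZ
    (fun s => (isUnit_iff_isUnit_det _).1 (hC_inv _ s)) (hC_zero _) s

theorem stmt_8_general {α : Type*} (n : ℕ)
    (φ : ℝ → α → α)
    (hφ_add : ∀ (t s : ℝ) (x : α), φ (t + s) x = φ t (φ s x))
    (A : α → Matrix (Fin n) (Fin n) ℂ)
    (C : α × ℝ → Matrix (Fin n) (Fin n) ℂ)
    (hC_zero : ∀ x : α, C (x, 0) = 1)
    (hC_inv : ∀ (x : α) (t : ℝ), IsUnit (C (x, t)))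
    (hC_ode : ∀ (x : α) (t : ℝ),
      HasDerivAt (fun s : ℝ => C (x, s)) (-(A (φ t x) * C (x, t))) t)
    (τ : α → ℝ)
    (hτ : ∀ (x : α) (t : ℝ), τ (φ t x) = τ x - t)
    (R : α → Matrix (Fin n) (Fin n) ℂ)
    (hR : ∀ x : α, R x = (C (x, τ x))⁻¹) :
    (∀ (x : α) (t : ℝ), R (φ t x) = C (x, t) * R x) ∧
    (∀ (x : α) (t : ℝ),
      HasDerivAt (fun s : ℝ => R (φ s x)) (-(A (φ t x) * R (φ t x))) t) := by
  have hR_flow : ∀ x t, R (φ t x) = C (x, t) * R x := by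
    intro x t
    have hcocycle :=
      cocycle_of_hasDerivAt_neg_mul φ hφ_add A C hC_zero hC_inv hC_ode x t (τ x - t)
    rw [add_sub_cancel] at hcocycle
    rw [hR, hR, hτ, hcocycle, Matrix.mul_inv_rev,
      mul_nonsing_inv_cancel_left _ _ ((isUnit_iff_isUnit_det _).1 (hC_inv x t))]
  refine ⟨hR_flow, fun x t => ?_⟩
  simp only [hR_flow x]
  simpa [Matrix.mul_assoc] using (hC_ode x t).matrix_mul (hasDerivAt_const t (R x))

/-- Lemma 3.1 of the paper: if `τ` satisfies `τ(φ_t x) = τ(x) - t` (an exit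
time) and `C` is the attenuation cocycle of `A` along the flow `φ`, then
`R(x) := C(x, τ(x))⁻¹` satisfies `R(φ_t x) = C(x,t) R(x)` and is an
integrating factor: `XR + AR = 0` along the flow. -/
theorem stmt_8 {α : Type*} (n : ℕ) (hn : 1 ≤ n)
    (φ : ℝ → α → α)
    (hφ_zero : ∀ x : α, φ 0 x = x)
    (hφ_add : ∀ (t s : ℝ) (x : α), φ (t + s) x = φ t (φ s x))
    (A : α → Matrix (Fin n) (Fin n) ℂ)
    (hA_cont : ∀ x : α, Continuous fun t : ℝ => A (φ t x))
    (C : α × ℝ → Matrix (Fin n) (Fin n) ℂ)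
    (hC_zero : ∀ x : α, C (x, 0) = 1)
    (hC_inv : ∀ (x : α) (t : ℝ), IsUnit (C (x, t)))
    (hC_ode : ∀ (x : α) (t : ℝ),
      HasDerivAt (fun s : ℝ => C (x, s)) (-(A (φ t x) * C (x, t))) t)
    (τ : α → ℝ)
    (hτ : ∀ (x : α) (t : ℝ), τ (φ t x) = τ x - t)
    (R : α → Matrix (Fin n) (Fin n) ℂ)
    (hR : ∀ x : α, R x = (C (x, τ x))⁻¹) :
    (∀ (x : α) (t : ℝ), R (φ t x) = C (x, t) * R x) ∧
    (∀ (x : α) (t : ℝ),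
      HasDerivAt (fun s : ℝ => R (φ s x)) (-(A (φ t x) * R (φ t x))) t) :=
  stmt_8_general n φ hφ_add A C hC_zero hC_inv hC_ode τ hτ R hR
end

section
/- Let n ≥ 1, T > 0, and let A, B : [0,T] → ℂ^{n×n}. Suppose U_A, U_B : [0,T] → ℂ^{n×n} are differentiable on [0,T] with U_A'(t) + A(t)U_A(t) = 0, U_B'(t) + B(t)U_B(t) = 0 for all t ∈ [0,T], U_A(T) = U_B(T) = Id, and every U_B(t) is invertible. Then W(t) := U_A(t)·U_B(t)^{-1} − Id satisfies W(T) = 0 and the transport equation W'(t) + A(t)W(t) − W(t)B(t) = −(A(t) − B(t)) for all t ∈ [0,T]; in particular U_A(0)·U_B(0)^{-1} = Id + W(0). -/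
/-!
Differentiating `U_A U_B⁻¹` with `(U_B⁻¹)' = -U_B⁻¹ U_B' U_B⁻¹ = U_B⁻¹ B` gives
`(U_A U_B⁻¹)' = -A U_A U_B⁻¹ + U_A U_B⁻¹ B`; substituting `U_A U_B⁻¹ = W + 1` yields the transport
equation for `W`. This is a computation in any complete normed algebra; for matrices it is carried
out with the `L∞`-operator norm, which makes them a normed ring and induces the entrywise topology.
-/

section NormedAlgebra

variable {𝕜 R : Type*} [NontriviallyNormedField 𝕜] [NormedRing R] [HasSummableGeomSeries R]
  [NormedAlgebra 𝕜 R] {s : Set 𝕜} {t : 𝕜}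

theorem HasDerivWithinAt.ringInverse {u : 𝕜 → R} {u' : R} (hu : HasDerivWithinAt u u' s t)
    (ht : IsUnit (u t)) :
    HasDerivWithinAt (fun τ ↦ Ring.inverse (u τ))
      (-(Ring.inverse (u t) * u' * Ring.inverse (u t))) s t := by
  obtain ⟨x, hx⟩ := ht
  have hinv : HasFDerivAt Ring.inverse (-ContinuousLinearMap.mulLeftRight 𝕜 R ↑x⁻¹ ↑x⁻¹) (u t) :=
    hx ▸ hasFDerivAt_ringInverse x
  exact (hinv.comp_hasDerivWithinAt t hu).congr_deriv (by simp [← hx])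

theorem hasDerivWithinAt_mul_ringInverse_sub_one {A B UA UB : 𝕜 → R}
    (hUA : HasDerivWithinAt UA (-(A t * UA t)) s t)
    (hUB : HasDerivWithinAt UB (-(B t * UB t)) s t) (hUBt : IsUnit (UB t)) :
    HasDerivWithinAt (fun τ ↦ UA τ * Ring.inverse (UB τ) - 1)
      (-(A t * (UA t * Ring.inverse (UB t) - 1)) + (UA t * Ring.inverse (UB t) - 1) * B t
        - (A t - B t)) s t := by
  refine ((hUA.mul (hUB.ringInverse hUBt)).sub_const 1).congr_deriv ?_
  simp only [mul_neg, neg_mul, neg_neg, mul_assoc, Ring.mul_inverse_cancel _ hUBt, mul_one]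
  noncomm_ring

end NormedAlgebra

theorem Matrix.hasDerivWithinAt_mul_inv_sub_one {𝕜 α m : Type*} [NontriviallyNormedField 𝕜]
    [NormedField α] [NormedAlgebra 𝕜 α] [CompleteSpace α] [Fintype m] [DecidableEq m]
    {s : Set 𝕜} {t : 𝕜} {A B UA UB : 𝕜 → Matrix m m α}
    (hUA : HasDerivWithinAt UA (-(A t * UA t)) s t)
    (hUB : HasDerivWithinAt UB (-(B t * UB t)) s t) (hUBt : IsUnit (UB t)) :
    HasDerivWithinAt (fun τ ↦ UA τ * (UB τ)⁻¹ - 1)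
      (-(A t * (UA t * (UB t)⁻¹ - 1)) + (UA t * (UB t)⁻¹ - 1) * B t - (A t - B t)) s t := by
  let := Matrix.linftyOpNormedRing (n := m) (α := α)
  let := Matrix.linftyOpNormedAlgebra (R := 𝕜) (n := m) (α := α)
  -- instance search picks the entrywise uniformity here, so completeness is supplied by hand
  have : HasSummableGeomSeries (Matrix m m α) :=
    @instHasSummableGeomSeriesOfCompleteSpace _ _ (inferInstanceAs (CompleteSpace (m → m → α)))
  simp only [Matrix.nonsing_inv_eq_ringInverse]
  exact hasDerivWithinAt_mul_ringInverse_sub_one hUA hUB hUBt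

theorem stmt_11_general (n : ℕ) (T : ℝ)
    (A B UA UB : ℝ → Matrix (Fin n) (Fin n) ℂ)
    (hUA : ∀ t ∈ Set.Icc (0 : ℝ) T,
      HasDerivWithinAt UA (-(A t * UA t)) (Set.Icc (0 : ℝ) T) t)
    (hUB : ∀ t ∈ Set.Icc (0 : ℝ) T,
      HasDerivWithinAt UB (-(B t * UB t)) (Set.Icc (0 : ℝ) T) t)
    (hUAT : UA T = 1) (hUBT : UB T = 1)
    (hUB_inv : ∀ t ∈ Set.Icc (0 : ℝ) T, IsUnit (UB t)) :
    UA T * (UB T)⁻¹ - 1 = 0 ∧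
    (∀ t ∈ Set.Icc (0 : ℝ) T,
      HasDerivWithinAt (fun s => UA s * (UB s)⁻¹ - 1)
        (-(A t * (UA t * (UB t)⁻¹ - 1)) + (UA t * (UB t)⁻¹ - 1) * B t
          - (A t - B t))
        (Set.Icc (0 : ℝ) T) t) ∧
    UA 0 * (UB 0)⁻¹ = 1 + (UA 0 * (UB 0)⁻¹ - 1) :=
  ⟨by simp [hUAT, hUBT],
    fun t ht ↦ Matrix.hasDerivWithinAt_mul_inv_sub_one (hUA t ht) (hUB t ht) (hUB_inv t ht),
    by abel⟩

/-- The pseudo-linearization identity along one geodesic (Proposition 3.4 of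
the paper): with fundamental solutions `U_A, U_B` of `U' + AU = 0`,
`U' + BU = 0`, `U(T) = Id`, the map `W := U_A U_B⁻¹ - Id` satisfies `W(T) = 0`
and the transport equation `W' + AW - WB = -(A - B)`; in particular
`U_A(0) U_B(0)⁻¹ = Id + W(0)`. -/
theorem stmt_11 (n : ℕ) (hn : 1 ≤ n) (T : ℝ) (hT : 0 < T)
    (A B UA UB : ℝ → Matrix (Fin n) (Fin n) ℂ)
    (hUA : ∀ t ∈ Set.Icc (0 : ℝ) T,
      HasDerivWithinAt UA (-(A t * UA t)) (Set.Icc (0 : ℝ) T) t)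
    (hUB : ∀ t ∈ Set.Icc (0 : ℝ) T,
      HasDerivWithinAt UB (-(B t * UB t)) (Set.Icc (0 : ℝ) T) t)
    (hUAT : UA T = 1) (hUBT : UB T = 1)
    (hUB_inv : ∀ t ∈ Set.Icc (0 : ℝ) T, IsUnit (UB t)) :
    UA T * (UB T)⁻¹ - 1 = 0 ∧
    (∀ t ∈ Set.Icc (0 : ℝ) T,
      HasDerivWithinAt (fun s => UA s * (UB s)⁻¹ - 1)
        (-(A t * (UA t * (UB t)⁻¹ - 1)) + (UA t * (UB t)⁻¹ - 1) * B t
          - (A t - B t))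
        (Set.Icc (0 : ℝ) T) t) ∧
    UA 0 * (UB 0)⁻¹ = 1 + (UA 0 * (UB 0)⁻¹ - 1) :=
  stmt_11_general n T A B UA UB hUA hUB hUAT hUBT hUB_inv
end
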